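/- arXiv:2008.12457 — 7 statements merged into one kernel-verified Lean document; each statement's English description precedes it below -/
import Mathlib

section
/- Let F be a finite field with q elements and let a ∈ F be nonzero. Then the number of 2×2 matrices X over F satisfying X² = a•X is exactly q² + q + 2. -/
/-!
By Cayley–Hamilton, `X * X = X.trace • X - X.det • 1`, so `X * X = a • X` forces either
`X.trace = a` and `X.det = 0`, or `X` scalar, in which case `X = 0` or `X = a • 1`.
Matrices of trace `a` and determinant `0` are `!![x, y; z, a - x]` with `y * z = x * (a - x)`.
The equation `y * z = c` has `q - 1` solutions for `c ≠ 0` and `2q - 1` for `c = 0`, and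
`x * (a - x) = 0` for exactly two `x`, so there are `q (q - 1) + 2q = q² + q` of them.
-/

open Finset Matrix

theorem card_pairs_mul_eq {G : Type*} [GroupWithZero G] [Fintype G] [DecidableEq G] (c : G) :
    Nat.card {p : G × G // p.1 * p.2 = c} =
      Fintype.card G - 1 + if c = 0 then Fintype.card G else 0 := by
  rw [Nat.card_eq_fintype_card, Fintype.card_subtype, card_filter, Fintype.sum_prod_type,
    Fintype.sum_eq_add_sum_compl 0, add_comm]
  congr 1
  · have hunique : ∀ x ∈ ({0}ᶜ : Finset G), (∑ y, if x * y = c then 1 else 0) = 1 := by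
      intro x hx
      have hx0 : x ≠ 0 := by simpa using hx
      simp [← eq_inv_mul_iff_mul_eq₀ hx0]
    rw [sum_congr rfl hunique, sum_const, card_compl, card_singleton, smul_eq_mul, mul_one]
  · simp [eq_comm]

namespace Matrix

theorem mul_self_fin_two {R : Type*} [CommRing R] (M : Matrix (Fin 2) (Fin 2) R) :
    M * M = M.trace • M - M.det • 1 := by
  nontriviality R
  have h := M.aeval_self_charpoly
  rw [charpoly_fin_two] at h
  simp only [sq, map_add, Polynomial.aeval_sub, map_mul, Polynomial.aeval_X, Polynomial.aeval_C,
    Algebra.algebraMap_eq_smul_one, Algebra.smul_mul_assoc, one_mul] at h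
  rw [← sub_eq_zero, ← h]
  abel

theorem smul_one_mul_self_eq_smul_iff {n K : Type*} [Fintype n] [DecidableEq n] [Nonempty n]
    [Field K] (a c : K) :
    (c • 1 : Matrix n n K) * (c • 1) = a • (c • 1) ↔ c = 0 ∨ c = a := by
  rw [smul_mul_smul_comm, one_mul, smul_smul, ← sub_eq_zero, ← sub_smul, smul_eq_zero,
    or_iff_left one_ne_zero, sub_eq_zero, mul_eq_mul_right_iff, or_comm]

theorem mul_self_eq_smul_iff_fin_two {K : Type*} [Field K] (a : K)
    (X : Matrix (Fin 2) (Fin 2) K) :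
    X * X = a • X ↔ X = 0 ∨ X = a • 1 ∨ (X.trace = a ∧ X.det = 0) := by
  constructor
  · intro h
    have hscalar : (X.trace - a) • X = X.det • 1 := by
      rw [sub_smul, ← h, mul_self_fin_two]; abel
    by_cases ht : X.trace = a
    · rw [ht, sub_self, zero_smul, eq_comm, smul_eq_zero] at hscalar
      exact Or.inr (Or.inr ⟨ht, hscalar.resolve_right one_ne_zero⟩)
    · have hX : X = ((X.trace - a)⁻¹ * X.det) • 1 := by
        rw [← smul_smul, ← hscalar, smul_smul, inv_mul_cancel₀ (sub_ne_zero.mpr ht), one_smul]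
      rw [hX, smul_one_mul_self_eq_smul_iff] at h
      rcases h with h | h <;> rw [hX, h] <;> simp
  · rintro (rfl | rfl | ⟨ht, hd⟩)
    · simp
    · rw [smul_one_mul_self_eq_smul_iff]; exact Or.inr rfl
    · rw [mul_self_fin_two, ht, hd, zero_smul, sub_zero]

def traceDetZeroEquiv {K : Type*} [Field K] (a : K) :
    {X : Matrix (Fin 2) (Fin 2) K | X.trace = a ∧ X.det = 0} ≃
      Σ x : K, {p : K × K // p.1 * p.2 = x * (a - x)} where
  toFun X := ⟨X.1 0 0, (X.1 0 1, X.1 1 0), by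
    obtain ⟨ht, hd⟩ := X.2
    rw [trace_fin_two] at ht
    rw [det_fin_two] at hd
    linear_combination X.1 0 0 * ht - hd⟩
  invFun p := ⟨!![p.1, p.2.1.1; p.2.1.2, a - p.1], by
    simp only [Set.mem_ofPred_eq, trace_fin_two_of, det_fin_two_of]
    exact ⟨by ring, by linear_combination -p.2.2⟩⟩
  left_inv X := by
    obtain ⟨X, ht, hd⟩ := X
    rw [trace_fin_two] at ht
    ext i j
    fin_cases i <;> fin_cases j <;> simp [← ht]
  right_inv _ := rfl

theorem card_trace_eq_det_eq_zero_fin_two {K : Type*} [Field K] [Fintype K] {a : K}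
    (ha : a ≠ 0) :
    Nat.card {X : Matrix (Fin 2) (Fin 2) K | X.trace = a ∧ X.det = 0} =
      Fintype.card K ^ 2 + Fintype.card K := by
  classical
  have hroots : ({x | x * (a - x) = 0} : Finset K) = {0, a} := by
    ext x; simp [sub_eq_zero, eq_comm]
  rw [Nat.card_congr (traceDetZeroEquiv a), Nat.card_sigma]
  simp_rw [card_pairs_mul_eq, sum_add_distrib, ← sum_filter, hroots, sum_const,
    card_pair ha.symm, card_univ, smul_eq_mul]
  obtain ⟨q, hq⟩ : ∃ q, Fintype.card K = q + 1 :=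
    ⟨_, (Nat.succ_pred_eq_of_pos Fintype.card_pos).symm⟩
  rw [hq, Nat.add_sub_cancel]
  ring

end Matrix

theorem stmt_1 (F : Type*) [Field F] [Fintype F] (a : F) (ha : a ≠ 0) :
    Nat.card {X : Matrix (Fin 2) (Fin 2) F | X * X = a • X} =
      Fintype.card F ^ 2 + Fintype.card F + 2 := by
  have htrace_smul_one : (a • 1 : Matrix (Fin 2) (Fin 2) F).trace ≠ a := by
    simp only [trace_smul, trace_one, Fintype.card_fin, Nat.cast_ofNat, smul_eq_mul]
    intro h
    exact ha (by linear_combination h)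
  have hsplit : {X : Matrix (Fin 2) (Fin 2) F | X * X = a • X} =
      insert 0 (insert (a • 1) {X | X.trace = a ∧ X.det = 0}) := by
    ext X
    simp [mul_self_eq_smul_iff_fin_two]
  rw [Nat.card_coe_set_eq, hsplit, Set.ncard_insert_of_notMem, Set.ncard_insert_of_notMem,
    ← Nat.card_coe_set_eq, card_trace_eq_det_eq_zero_fin_two ha]
  · exact fun h => htrace_smul_one h.1
  · simp [ha.symm, eq_comm (a := (0 : Matrix (Fin 2) (Fin 2) F)), ha]
end

section
/- Let F be a finite field with q elements, a ∈ F nonzero, and n ≥ 2. Let X be a nonzero singular n×n matrix over F satisfying X² = a•X. Then there exists k with 1 ≤ k ≤ ⌊n/2⌋ such that X is similar over F (i.e. conjugate by some element of GL(n,F)) to either X_k(0,a) or X_k(a,a). -/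
/-!
Since `a ≠ 0`, the matrix `a⁻¹ • X` is idempotent, so `Fⁿ` splits as its range plus its kernel
and its conjugacy class is determined by its rank `r`, where `0 < r < n`. Both `X_k(0,a)` and
`a • 1 - X_k(a,a)` factor as `C * R` with `C` of size `n × k`, `R` of size `k × n` and
`R * C = a • 1`, coming blockwise from `Q(a) = (1, a)ᵀ (0, 1)` and `a • 1 - Q(a) = (1, 0)ᵀ (a, -1)`;
hence `X_k(0,a)` and `X_k(a,a)` also satisfy `Y * Y = a • Y`, with ranks `k` and
`n - k`. Take `k = r` when `r ≤ n / 2` and `k = n - r` otherwise.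
-/

/-- The `n × n` block-diagonal matrix `X_k(b,a)` whose first block is the scalar
matrix `b • I` of size `n - 2k`, followed by `k` diagonal blocks each equal to
`Q(a) = !![0, 1; 0, a]`. -/
def Xk {F : Type*} [Field F] (n k : ℕ) (b a : F) : Matrix (Fin n) (Fin n) F :=
  Matrix.of fun i j =>
    if (i : ℕ) < n - 2 * k ∨ (j : ℕ) < n - 2 * k then
      if (i : ℕ) = (j : ℕ) then b else 0
    else if ((i : ℕ) - (n - 2 * k)) / 2 = ((j : ℕ) - (n - 2 * k)) / 2 ∧
        ((j : ℕ) - (n - 2 * k)) % 2 = 1 then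
      if ((i : ℕ) - (n - 2 * k)) % 2 = 0 then 1 else a
    else 0

open LinearMap Module

theorem LinearMap.IsIdempotentElem.exists_conj_eq {K E : Type*} [Field K] [AddCommGroup E]
    [Module K E] [FiniteDimensional K E] {f g : E →ₗ[K] E} (hf : IsIdempotentElem f)
    (hg : IsIdempotentElem g) (h : finrank K (range f) = finrank K (range g)) :
    ∃ e : E ≃ₗ[K] E, e.conj f = g := by
  have hker : finrank K (ker f) = finrank K (ker g) := by
    have := finrank_range_add_finrank_ker f
    have := finrank_range_add_finrank_ker g
    omega
  obtain ⟨φ⟩ := FiniteDimensional.nonempty_linearEquiv_of_finrank_eq h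
  obtain ⟨ψ⟩ := FiniteDimensional.nonempty_linearEquiv_of_finrank_eq hker
  have hf' := LinearMap.ext_iff.mp hf.isProj_range.eq_conj_prodMap
  have hg' := LinearMap.ext_iff.mp hg.isProj_range.eq_conj_prodMap
  refine ⟨((range f).prodEquivOfIsCompl _ hf.isCompl).symm.trans
    ((φ.prodCongr ψ).trans ((range g).prodEquivOfIsCompl _ hg.isCompl)), ?_⟩
  ext x
  simp [LinearEquiv.conj_apply, hf', hg']

namespace Matrix

variable {n K : Type*} [Fintype n] [DecidableEq n] [Field K]

theorem exists_conj_eq_of_isIdempotentElem {A B : Matrix n n K} (hA : IsIdempotentElem A)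
    (hB : IsIdempotentElem B) (h : A.rank = B.rank) :
    ∃ P : GL n K, (P : Matrix n n K) * A * ((P⁻¹ : GL n K) : Matrix n n K) = B := by
  obtain ⟨e, he⟩ := LinearMap.IsIdempotentElem.exists_conj_eq (hA.map toLinAlgEquiv')
    (hB.map toLinAlgEquiv') h
  refine ⟨Units.map (toMatrixAlgEquiv' : Module.End K (n → K) ≃ₐ[K] Matrix n n K)
    ((LinearMap.GeneralLinearGroup.generalLinearEquiv K _).symm e), toLinAlgEquiv'.injective ?_⟩
  rw [← he]
  simp [LinearEquiv.conj_apply, Module.End.mul_eq_comp]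
  rfl

theorem exists_conj_eq_of_mul_self_eq_smul {a : K} (ha : a ≠ 0) {A B : Matrix n n K}
    (hA : A * A = a • A) (hB : B * B = a • B) (h : A.rank = B.rank) :
    ∃ P : GL n K, (P : Matrix n n K) * A * ((P⁻¹ : GL n K) : Matrix n n K) = B := by
  have idem {M : Matrix n n K} (hM : M * M = a • M) : IsIdempotentElem (a⁻¹ • M) := by
    rw [IsIdempotentElem, smul_mul_smul_comm, hM, smul_smul, mul_assoc, inv_mul_cancel₀ ha, mul_one]
  have hunit : a⁻¹ ∈ nonZeroDivisors K := mem_nonZeroDivisors_of_ne_zero (inv_ne_zero ha)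
  obtain ⟨P, hP⟩ := exists_conj_eq_of_isIdempotentElem (idem hA) (idem hB) <| by
    rwa [rank_smul_of_mem_nonZeroDivisors _ hunit, rank_smul_of_mem_nonZeroDivisors _ hunit]
  refine ⟨P, smul_right_injective _ (inv_ne_zero ha) ?_⟩
  simpa only [Matrix.mul_smul, Matrix.smul_mul] using hP

theorem range_mulVecLin_smul_one_sub {a : K} (ha : a ≠ 0) {A : Matrix n n K}
    (hA : A * A = a • A) : range (a • 1 - A).mulVecLin = ker A.mulVecLin := by
  ext v
  constructor
  · rintro ⟨w, rfl⟩
    simp [mulVec_sub, mulVec_smul, mulVec_mulVec, hA, smul_mulVec]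
  · intro hv
    refine ⟨a⁻¹ • v, ?_⟩
    simp [mem_ker.mp hv, smul_smul, ha]

theorem rank_add_rank_smul_one_sub {a : K} (ha : a ≠ 0) {A : Matrix n n K}
    (hA : A * A = a • A) : A.rank + (a • 1 - A).rank = Fintype.card n := by
  rw [rank, rank, range_mulVecLin_smul_one_sub ha hA, finrank_range_add_finrank_ker,
    Module.finrank_fintype_fun_eq_card]

theorem smul_one_sub_mul_self {a : K} {A : Matrix n n K} (hA : A * A = a • A) :
    (a • 1 - A) * (a • 1 - A) = a • (a • 1 - A) := by
  simp only [Matrix.sub_mul, Matrix.mul_sub, Matrix.smul_mul, Matrix.mul_smul, Matrix.one_mul,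
    Matrix.mul_one, hA]
  module

theorem mul_self_eq_smul_of_mul_eq_smul_one {m d : Type*} [Fintype m] [Fintype d]
    [DecidableEq d] {a : K} {C : Matrix m d K} {R : Matrix d m K}
    (hRC : R * C = a • 1) :
    C * R * (C * R) = a • (C * R) := by
  rw [Matrix.mul_assoc, ← Matrix.mul_assoc R, hRC, Matrix.smul_mul, Matrix.one_mul, Matrix.mul_smul]

theorem rank_mul_eq_card_of_mul_eq_smul_one {m d : Type*} [Fintype m] [Fintype d]
    [DecidableEq d] {a : K} (ha : a ≠ 0) {C : Matrix m d K} {R : Matrix d m K}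
    (hRC : R * C = a • 1) :
    (C * R).rank = Fintype.card d := by
  refine le_antisymm ((rank_mul_le_left C R).trans (rank_le_card_width C)) ?_
  calc Fintype.card d = (R * (C * R) * C).rank := by
        rw [← Matrix.mul_assoc, hRC, Matrix.smul_mul, Matrix.one_mul, Matrix.smul_mul, hRC,
          smul_smul, rank_smul_of_mem_nonZeroDivisors _
            (mem_nonZeroDivisors_of_ne_zero (mul_ne_zero ha ha)), rank_one]
    _ ≤ (C * R).rank := (rank_mul_le_left _ _).trans (rank_mul_le_right _ _)

theorem rank_pos_of_ne_zero {m : Type*} {A : Matrix m n K} (hA : A ≠ 0) : 0 < A.rank := by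
  rwa [pos_iff_ne_zero, rank, Ne, Submodule.finrank_eq_zero, range_eq_bot, ← toLin'_apply',
    LinearEquiv.map_eq_zero_iff]

theorem rank_lt_card_of_det_eq_zero {A : Matrix n n K} (hA : A.det = 0) :
    A.rank < Fintype.card n := by
  obtain ⟨v, hv0, hv⟩ := exists_mulVec_eq_zero_iff.mpr hA
  have hker : ker A.mulVecLin ≠ ⊥ := fun h => hv0 <| (Submodule.mem_bot K).mp (h ▸ hv)
  have := finrank_range_add_finrank_ker A.mulVecLin
  rw [finrank_fintype_fun_eq_card] at this
  have := Submodule.finrank_eq_zero.not.mpr hker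
  unfold rank
  omega

end Matrix

section Blocks

open Matrix

variable {K : Type*} [Field K]

def blockColumn (n k : ℕ) (u₀ u₁ : K) : Matrix (Fin n) (Fin k) K :=
  Matrix.of fun i t =>
    if (i : ℕ) = n - 2 * k + 2 * t then u₀ else if (i : ℕ) = n - 2 * k + 2 * t + 1 then u₁ else 0

def blockRow (n k : ℕ) (v₀ v₁ : K) : Matrix (Fin k) (Fin n) K :=
  (blockColumn n k v₀ v₁).transpose

theorem blockRow_mul_blockColumn {n k : ℕ} (hk : 2 * k ≤ n) (u₀ u₁ v₀ v₁ : K) :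
    blockRow n k v₀ v₁ * blockColumn n k u₀ u₁ = (v₀ * u₀ + v₁ * u₁) • 1 := by
  ext t s
  rw [Matrix.mul_apply, Finset.sum_eq_add (⟨n - 2 * k + 2 * t, by omega⟩ : Fin n)
    ⟨n - 2 * k + 2 * t + 1, by omega⟩ (by simp [Fin.ext_iff])]
  · simp only [blockRow, blockColumn, transpose_apply, of_apply, one_apply, Fin.ext_iff,
      Matrix.smul_apply, smul_eq_mul]
    split_ifs <;> first | omega | ring
  · intro i _ hi
    simp only [blockRow, blockColumn, transpose_apply, of_apply, ne_eq, Fin.ext_iff] at hi ⊢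
    split_ifs <;> first | omega | simp
  all_goals simp

theorem blockColumn_mul_blockRow_apply {n k : ℕ} (u₀ u₁ v₀ v₁ : K) (i j : Fin n) :
    (blockColumn n k u₀ u₁ * blockRow n k v₀ v₁) i j =
      if n - 2 * k ≤ i ∧ n - 2 * k ≤ j ∧ (i - (n - 2 * k)) / 2 = (j - (n - 2 * k)) / 2 then
        (if (i - (n - 2 * k)) % 2 = 0 then u₀ else u₁) *
          (if (j - (n - 2 * k)) % 2 = 0 then v₀ else v₁)
      else 0 := by
  rw [mul_apply]
  by_cases hi : n - 2 * k ≤ i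
  · have := i.isLt
    rw [Finset.sum_eq_single ⟨(i - (n - 2 * k)) / 2, by omega⟩]
    · simp only [blockRow, blockColumn, transpose_apply, of_apply]
      split_ifs <;> first | omega | simp
    · intro t _ ht
      simp only [blockRow, blockColumn, transpose_apply, of_apply, ne_eq, Fin.ext_iff] at ht ⊢
      split_ifs <;> first | omega | simp
    · simp
  · rw [if_neg (by omega)]
    refine Finset.sum_eq_zero fun t _ => ?_
    simp only [blockRow, blockColumn, transpose_apply, of_apply]
    split_ifs <;> first | omega | simp

theorem Xk_zero_eq_blockColumn_mul_blockRow (n k : ℕ) (a : K) :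
    Xk n k 0 a = blockColumn n k 1 a * blockRow n k (0 : K) 1 := by
  ext i j
  rw [blockColumn_mul_blockRow_apply]
  simp only [Xk, of_apply]
  split_ifs <;> first | omega | simp

theorem smul_one_sub_Xk_self_eq_blockColumn_mul_blockRow (n k : ℕ) (a : K) :
    a • (1 : Matrix (Fin n) (Fin n) K) - Xk n k a a =
      blockColumn n k (1 : K) 0 * blockRow n k a (-1) := by
  ext i j
  rw [blockColumn_mul_blockRow_apply]
  simp only [Xk, Matrix.sub_apply, Matrix.smul_apply, one_apply, of_apply, Fin.ext_iff,
    smul_eq_mul]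
  split_ifs <;> first | omega | simp

theorem Xk_zero_mul_self {n k : ℕ} (hk : 2 * k ≤ n) (a : K) :
    Xk n k 0 a * Xk n k 0 a = a • Xk n k 0 a := by
  rw [Xk_zero_eq_blockColumn_mul_blockRow]
  exact mul_self_eq_smul_of_mul_eq_smul_one (by simpa using blockRow_mul_blockColumn hk 1 a 0 1)

theorem rank_Xk_zero {n k : ℕ} (hk : 2 * k ≤ n) {a : K} (ha : a ≠ 0) :
    (Xk n k 0 a).rank = k := by
  rw [Xk_zero_eq_blockColumn_mul_blockRow, rank_mul_eq_card_of_mul_eq_smul_one ha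
    (by simpa using blockRow_mul_blockColumn hk 1 a 0 1), Fintype.card_fin]

theorem smul_one_sub_Xk_self_mul_self {n k : ℕ} (hk : 2 * k ≤ n) (a : K) :
    (a • 1 - Xk n k a a) * (a • 1 - Xk n k a a) = a • (a • 1 - Xk n k a a) := by
  rw [smul_one_sub_Xk_self_eq_blockColumn_mul_blockRow]
  exact mul_self_eq_smul_of_mul_eq_smul_one
    (by simpa using blockRow_mul_blockColumn hk 1 0 a (-1))

theorem rank_smul_one_sub_Xk_self {n k : ℕ} (hk : 2 * k ≤ n) {a : K} (ha : a ≠ 0) :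
    (a • 1 - Xk n k a a).rank = k := by
  rw [smul_one_sub_Xk_self_eq_blockColumn_mul_blockRow, rank_mul_eq_card_of_mul_eq_smul_one ha
    (by simpa using blockRow_mul_blockColumn hk 1 0 a (-1)), Fintype.card_fin]

theorem Xk_self_mul_self {n k : ℕ} (hk : 2 * k ≤ n) (a : K) :
    Xk n k a a * Xk n k a a = a • Xk n k a a := by
  simpa only [sub_sub_cancel] using smul_one_sub_mul_self (smul_one_sub_Xk_self_mul_self hk a)

theorem rank_Xk_self {n k : ℕ} (hk : 2 * k ≤ n) {a : K} (ha : a ≠ 0) :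
    (Xk n k a a).rank = n - k := by
  have := rank_add_rank_smul_one_sub ha (smul_one_sub_Xk_self_mul_self hk a)
  rw [sub_sub_cancel, rank_smul_one_sub_Xk_self hk ha, Fintype.card_fin] at this
  omega

end Blocks

open Matrix

theorem stmt_4_general (F : Type*) [Field F] (a : F) (ha : a ≠ 0) (n : ℕ)
    (X : Matrix (Fin n) (Fin n) F) (hX : X * X = a • X) (hX0 : X ≠ 0) (hXsing : X.det = 0) :
    ∃ k : ℕ, 1 ≤ k ∧ k ≤ n / 2 ∧
      ((∃ P : GL (Fin n) F,
          (P : Matrix (Fin n) (Fin n) F) * Xk n k 0 a *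
            ((P⁻¹ : GL (Fin n) F) : Matrix (Fin n) (Fin n) F) = X) ∨
       (∃ P : GL (Fin n) F,
          (P : Matrix (Fin n) (Fin n) F) * Xk n k a a *
            ((P⁻¹ : GL (Fin n) F) : Matrix (Fin n) (Fin n) F) = X)) := by
  have hpos : 0 < X.rank := rank_pos_of_ne_zero hX0
  have hlt : X.rank < n := by simpa using rank_lt_card_of_det_eq_zero hXsing
  rcases le_or_gt X.rank (n / 2) with hle | hgt
  · refine ⟨X.rank, hpos, hle, Or.inl ?_⟩
    exact exists_conj_eq_of_mul_self_eq_smul ha (Xk_zero_mul_self (by omega) a) hX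
      (rank_Xk_zero (by omega) ha)
  · refine ⟨n - X.rank, by omega, by omega, Or.inr ?_⟩
    exact exists_conj_eq_of_mul_self_eq_smul ha (Xk_self_mul_self (by omega) a) hX
      (by rw [rank_Xk_self (by omega) ha]; omega)

theorem stmt_4 (F : Type*) [Field F] [Fintype F] (a : F) (ha : a ≠ 0) (n : ℕ) (hn : 2 ≤ n)
    (X : Matrix (Fin n) (Fin n) F) (hX : X * X = a • X) (hX0 : X ≠ 0) (hXsing : X.det = 0) :
    ∃ k : ℕ, 1 ≤ k ∧ k ≤ n / 2 ∧
      ((∃ P : GL (Fin n) F,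
          (P : Matrix (Fin n) (Fin n) F) * Xk n k 0 a *
            ((P⁻¹ : GL (Fin n) F) : Matrix (Fin n) (Fin n) F) = X) ∨
       (∃ P : GL (Fin n) F,
          (P : Matrix (Fin n) (Fin n) F) * Xk n k a a *
            ((P⁻¹ : GL (Fin n) F) : Matrix (Fin n) (Fin n) F) = X)) :=
  stmt_4_general F a ha n X hX hX0 hXsing
end

section
/- Let F be a finite field with q elements, a ∈ F nonzero, n ≥ 2, 1 ≤ k ≤ ⌊n/2⌋, and b ∈ {0, a}. Then the centralizer of X_k(b,a) in GL(n,F), i.e. the set {P ∈ GL(n,F) : P·X_k(b,a) = X_k(b,a)·P}, has cardinality equal to |GL(n−k,F)| · |GL(k,F)|, where |GL(ℓ,F)| = ∏_{i=0}^{ℓ−1}(q^ℓ − q^i). -/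
/-- `glOrder q ℓ = ∏_{i=0}^{ℓ-1} (q^ℓ - q^i)`, the order of `GL(ℓ, F_q)`. -/
def glOrder (q ℓ : ℕ) : ℕ := ∏ i ∈ Finset.range ℓ, (q ^ ℓ - q ^ i)

/-!
Since `b ∈ {0, a}` and `a ≠ 0`, the matrix `Q(a)` is diagonalisable with the distinct eigenvalues
`b` and `a - b`, so `X_k(b,a)` is conjugate in `GL(n, F)` to a diagonal matrix with `n - k` entries
equal to `b` and `k` entries equal to `a - b`. Conjugate matrices have equinumerous centralizers,
and a matrix commutes with a diagonal matrix taking two distinct values exactly when it is block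
diagonal with respect to the two eigenspaces; an invertible one is then a pair of invertible blocks.
-/

open Matrix

section UnitsCommute

variable {N N' : Type*} [Monoid N] [Monoid N']

theorem card_units_commute_mulEquiv (f : N ≃* N') (x : N) :
    Nat.card {u : Nˣ // (u : N) * x = x * u} = Nat.card {u : N'ˣ // (u : N') * f x = f x * u} :=
  Nat.card_congr <| (Units.mapEquiv f).toEquiv.subtypeEquiv fun u => by
    simp [← map_mul, f.injective.eq_iff]

theorem card_units_commute_of_semiconjBy {c : Nˣ} {x y : N} (h : SemiconjBy (c : N) x y) :
    Nat.card {u : Nˣ // (u : N) * x = x * u} = Nat.card {u : Nˣ // (u : N) * y = y * u} := by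
  have hy : y = c * x * ↑c⁻¹ := by rw [h.eq, Units.mul_inv_cancel_right]
  refine Nat.card_congr <| (MulAut.conj c).toEquiv.subtypeEquiv fun u => ?_
  simp only [MulEquiv.toEquiv_eq_coe, MulEquiv.coe_toEquiv, MulAut.conj_apply, Units.val_mul, hy,
    mul_assoc, Units.inv_mul_cancel_left, Units.mul_right_inj]
  rw [← mul_assoc, ← mul_assoc, Units.mul_left_inj]

end UnitsCommute

theorem card_GL_commute_submatrix {R ι κ : Type*} [CommSemiring R] [Fintype ι] [DecidableEq ι]
    [Fintype κ] [DecidableEq κ] (e : ι ≃ κ) (M : Matrix κ κ R) :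
    Nat.card {P : GL κ R // (P : Matrix κ κ R) * M = M * P} =
      Nat.card {P : GL ι R // (P : Matrix ι ι R) * M.submatrix e e = M.submatrix e e * P} :=
  card_units_commute_mulEquiv (reindexAlgEquiv R R e.symm).toMulEquiv M

theorem card_GL_eq_glOrder {F : Type*} [Field F] [Fintype F] (κ : Type*) [Fintype κ]
    [DecidableEq κ] : Nat.card (GL κ F) = glOrder (Fintype.card F) (Nat.card κ) := by
  rw [Nat.card_congr (Units.mapEquiv (reindexAlgEquiv F F (Fintype.equivFin κ)).toMulEquiv).toEquiv,
    card_GL_field, glOrder, Nat.card_eq_fintype_card,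
    Fin.prod_univ_eq_prod_range (fun i => _ ^ _ - _ ^ i)]

section CommuteDiagonal

variable {R : Type*} [CommRing R] [NoZeroDivisors R]

theorem mul_diagonal_eq_diagonal_mul_iff {κ : Type*} [Fintype κ] [DecidableEq κ] (d : κ → R)
    (P : Matrix κ κ R) :
    P * diagonal d = diagonal d * P ↔ ∀ i j, d i ≠ d j → P i j = 0 := by
  simp only [← Matrix.ext_iff, mul_diagonal, diagonal_mul]
  refine forall₂_congr fun i j => ?_
  rw [mul_comm, ← sub_eq_zero, ← sub_mul, mul_eq_zero, sub_eq_zero, or_iff_not_imp_left]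
  exact imp_congr_left ne_comm

variable {A B : Type*} [Fintype A] [Fintype B] [DecidableEq A] [DecidableEq B] {x y : R}

theorem mul_diagonal_sumElim_eq_iff (hxy : x ≠ y) (P : Matrix (A ⊕ B) (A ⊕ B) R) :
    P * diagonal (Sum.elim (fun _ => x) (fun _ => y)) =
        diagonal (Sum.elim (fun _ => x) (fun _ => y)) * P ↔
      fromBlocks P.toBlocks₁₁ 0 0 P.toBlocks₂₂ = P := by
  rw [mul_diagonal_eq_diagonal_mul_iff]
  constructor
  · intro h
    ext (i | i) (j | j)
    · rfl
    · exact (h _ _ (by simpa using hxy)).symm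
    · exact (h _ _ (by simpa using hxy.symm)).symm
    · rfl
  · rintro h (i | i) (j | j) hij <;> rw [← h] <;> simp at hij ⊢

theorem card_GL_commute_diagonal_sumElim (hxy : x ≠ y) :
    Nat.card {P : GL (A ⊕ B) R //
        (P : Matrix (A ⊕ B) (A ⊕ B) R) * diagonal (Sum.elim (fun _ => x) (fun _ => y)) =
          diagonal (Sum.elim (fun _ => x) (fun _ => y)) * (P : Matrix (A ⊕ B) (A ⊕ B) R)} =
      Nat.card (GL A R) * Nat.card (GL B R) := by
  let blocks (uv : GL A R × GL B R) : {P : GL (A ⊕ B) R //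
        (P : Matrix (A ⊕ B) (A ⊕ B) R) * diagonal (Sum.elim (fun _ => x) (fun _ => y)) =
          diagonal (Sum.elim (fun _ => x) (fun _ => y)) * (P : Matrix (A ⊕ B) (A ⊕ B) R)} :=
    ⟨⟨fromBlocks uv.1 0 0 uv.2, fromBlocks ↑uv.1⁻¹ 0 0 ↑uv.2⁻¹,
      by simp [fromBlocks_multiply], by simp [fromBlocks_multiply]⟩,
      by simp [mul_diagonal_sumElim_eq_iff hxy]⟩
  rw [← Nat.card_prod]
  refine (Nat.card_eq_of_bijective blocks ⟨?_, ?_⟩).symm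
  · rintro ⟨u, v⟩ ⟨u', v'⟩ h
    have h' := congr_arg (fun P => ((P.1 : GL (A ⊕ B) R) : Matrix (A ⊕ B) (A ⊕ B) R)) h
    simp only [blocks, fromBlocks_inj] at h'
    exact Prod.ext (Units.ext h'.1) (Units.ext h'.2.2.2)
  · rintro ⟨P, hP⟩
    rw [mul_diagonal_sumElim_eq_iff hxy] at hP
    have hunit := P.isUnit
    rw [← hP, isUnit_fromBlocks_zero₂₁] at hunit
    exact ⟨(hunit.1.unit, hunit.2.unit), Subtype.ext <| Units.ext hP⟩

theorem card_GL_commute_diagonal_of_two_values [DecidableEq R] {κ : Type*} [Fintype κ]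
    [DecidableEq κ] {d : κ → R} (hxy : x ≠ y) (hd : ∀ i, d i = x ∨ d i = y) :
    Nat.card {P : GL κ R // (P : Matrix κ κ R) * diagonal d = diagonal d * (P : Matrix κ κ R)} =
      Nat.card (GL {i // d i = x} R) * Nat.card (GL {i // d i = y} R) := by
  have hne (i : κ) : ¬d i = x ↔ d i = y :=
    ⟨(hd i).resolve_left, fun h h' => hxy (h'.symm.trans h)⟩
  let e : {i // d i = x} ⊕ {i // d i = y} ≃ κ :=
    (Equiv.sumCongr (Equiv.refl _) (Equiv.subtypeEquivRight hne).symm).trans (Equiv.sumCompl _)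
  have hde : (diagonal d).submatrix e e = diagonal (Sum.elim (fun _ => x) (fun _ => y)) := by
    rw [submatrix_diagonal_equiv]
    refine congr_arg diagonal (funext ?_)
    rintro (i | i)
    exacts [i.2, i.2]
  rw [card_GL_commute_submatrix e, hde, card_GL_commute_diagonal_sumElim hxy]

end CommuteDiagonal

section Xk

variable {F : Type*} [Field F]

def XkBlocks (m k : ℕ) (b a : F) : Matrix (Fin m ⊕ Fin 2 × Fin k) (Fin m ⊕ Fin 2 × Fin k) F :=
  fromBlocks (diagonal fun _ => b) 0 0 (blockDiagonal fun _ => !![0, 1; 0, a])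

-- `inl i ↦ i` and `inr (r, j) ↦ n - 2k + 2j + r`.
def blockIndexEquiv {n k : ℕ} (h : 2 * k ≤ n) : Fin (n - 2 * k) ⊕ Fin 2 × Fin k ≃ Fin n :=
  (Equiv.sumCongr (Equiv.refl _) ((Equiv.prodComm _ _).trans finProdFinEquiv)).trans
    (finSumFinEquiv.trans (finCongr (by omega)))

@[simp]
theorem blockIndexEquiv_inl_val {n k : ℕ} (h : 2 * k ≤ n) (i : Fin (n - 2 * k)) :
    (blockIndexEquiv h (Sum.inl i) : ℕ) = i :=
  rfl

@[simp]
theorem blockIndexEquiv_inr_val {n k : ℕ} (h : 2 * k ≤ n) (r : Fin 2) (j : Fin k) :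
    (blockIndexEquiv h (Sum.inr (r, j)) : ℕ) = n - 2 * k + (r + 2 * j) :=
  rfl

theorem Xk_submatrix_blockIndexEquiv {n k : ℕ} (h : 2 * k ≤ n) (b a : F) :
    (Xk n k b a).submatrix (blockIndexEquiv h) (blockIndexEquiv h) = XkBlocks (n - 2 * k) k b a := by
  have hdiv (r : Fin 2) (j : ℕ) : (r + 2 * j) / 2 = j := by omega
  have hmod (r : Fin 2) (j : ℕ) : (r + 2 * j) % 2 = r := by omega
  ext (i | ⟨r, j⟩) (i' | ⟨r', j'⟩)
  · simp [Xk, XkBlocks, diagonal_apply, Fin.val_inj]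
  · have : (i : ℕ) ≠ n - 2 * k + (r' + 2 * j') := by omega
    simp [Xk, XkBlocks, this]
  · have : n - 2 * k + (r + 2 * j) ≠ i' := by omega
    simp [Xk, XkBlocks, this]
  · simp only [Xk, XkBlocks, submatrix_apply, of_apply, blockIndexEquiv_inr_val, fromBlocks_apply₂₂,
      blockDiagonal_apply, add_tsub_cancel_left, hdiv, hmod, Fin.val_inj]
    fin_cases r <;> fin_cases r' <;> simp

-- The columns `(1, b)` and `(1, a - b)` are eigenvectors of `Q(a)` for `b` and `a - b` as soon as
-- `b (a - b) = 0`; the two eigenvalues are then `0` and `a` in some order.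
def eigenbasisBlocks (m k : ℕ) (b a : F) :
    Matrix (Fin m ⊕ Fin 2 × Fin k) (Fin m ⊕ Fin 2 × Fin k) F :=
  fromBlocks 1 0 0 (blockDiagonal fun _ => !![1, 1; b, a - b])

def XkEigenvalues (m k : ℕ) (b a : F) : Fin m ⊕ Fin 2 × Fin k → F :=
  Sum.elim (fun _ => b) (fun rj => ![b, a - b] rj.1)

theorem isUnit_eigenbasisBlocks {m k : ℕ} {b a : F} (hba : b ≠ a - b) :
    IsUnit (eigenbasisBlocks m k b a) := by
  rw [isUnit_iff_isUnit_det, eigenbasisBlocks, det_fromBlocks_zero₂₁, det_blockDiagonal]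
  simp [det_fin_two_of, sub_ne_zero.mpr hba.symm]

theorem semiconjBy_eigenbasisBlocks {m k : ℕ} {b a : F} (hb : b = 0 ∨ b = a) :
    SemiconjBy (eigenbasisBlocks m k b a) (diagonal (XkEigenvalues m k b a)) (XkBlocks m k b a) := by
  have hQ : !![1, 1; b, a - b] * diagonal ![b, a - b] = !![0, 1; 0, a] * !![1, 1; b, a - b] := by
    ext i j
    fin_cases i <;> fin_cases j <;> rcases hb with rfl | rfl <;> simp
  have hD : diagonal (XkEigenvalues m k b a) =
      fromBlocks (diagonal fun _ => b) 0 0 (blockDiagonal fun _ => diagonal ![b, a - b]) := by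
    rw [blockDiagonal_diagonal, fromBlocks_diagonal]
    rfl
  rw [SemiconjBy, hD, eigenbasisBlocks, XkBlocks, fromBlocks_multiply, fromBlocks_multiply]
  simp only [Matrix.mul_zero, Matrix.zero_mul, add_zero, Matrix.mul_one, Matrix.one_mul,
    ← blockDiagonal_mul, hQ]

theorem XkEigenvalues_eq_or (m k : ℕ) (b a : F) (p : Fin m ⊕ Fin 2 × Fin k) :
    XkEigenvalues m k b a p = b ∨ XkEigenvalues m k b a p = a - b := by
  rcases p with i | ⟨r, j⟩
  · exact Or.inl rfl
  · fin_cases r <;> simp [XkEigenvalues]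

theorem card_XkEigenvalues_eq_b {m k : ℕ} {b a : F} (hba : b ≠ a - b) :
    Nat.card {p // XkEigenvalues m k b a p = b} = m + k := by
  have hfiber (r : Fin 2) : ![b, a - b] r = b ↔ r = 0 := by fin_cases r <;> simp [hba.symm]
  rw [Nat.card_congr Equiv.subtypeSum, Nat.card_sum]
  simp only [XkEigenvalues, Sum.elim_inl, Sum.elim_inr, hfiber]
  rw [Nat.card_congr (Equiv.prodSubtypeFstEquivSubtypeProd (p := (· = 0))), Nat.card_prod]
  simp

theorem card_XkEigenvalues_eq_sub {m k : ℕ} {b a : F} (hba : b ≠ a - b) :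
    Nat.card {p // XkEigenvalues m k b a p = a - b} = k := by
  have hfiber (r : Fin 2) : ![b, a - b] r = a - b ↔ r = 1 := by fin_cases r <;> simp [hba]
  rw [Nat.card_congr Equiv.subtypeSum, Nat.card_sum]
  simp only [XkEigenvalues, Sum.elim_inl, Sum.elim_inr, hfiber]
  rw [Nat.card_congr (Equiv.prodSubtypeFstEquivSubtypeProd (p := (· = 1))), Nat.card_prod]
  simp [hba]

end Xk

theorem stmt_8_general (F : Type*) [Field F] [Fintype F] (a : F) (ha : a ≠ 0) (n k : ℕ)
    (hk : k ≤ n / 2) (b : F) (hb : b = 0 ∨ b = a) :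
    Nat.card {P : GL (Fin n) F //
        (P : Matrix (Fin n) (Fin n) F) * Xk n k b a =
          Xk n k b a * (P : Matrix (Fin n) (Fin n) F)} =
      glOrder (Fintype.card F) (n - k) * glOrder (Fintype.card F) k := by
  classical
  have h2k : 2 * k ≤ n := by omega
  have hba : b ≠ a - b := by rcases hb with rfl | rfl <;> simpa [eq_comm] using ha
  have hc := isUnit_eigenbasisBlocks (m := n - 2 * k) (k := k) hba
  rw [card_GL_commute_submatrix (blockIndexEquiv h2k), Xk_submatrix_blockIndexEquiv,
    ← card_units_commute_of_semiconjBy (c := hc.unit) (semiconjBy_eigenbasisBlocks hb),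
    card_GL_commute_diagonal_of_two_values hba (XkEigenvalues_eq_or _ _ _ _),
    card_GL_eq_glOrder, card_GL_eq_glOrder, card_XkEigenvalues_eq_b hba,
    card_XkEigenvalues_eq_sub hba]
  congr 2
  omega

theorem stmt_8 (F : Type*) [Field F] [Fintype F] (a : F) (ha : a ≠ 0) (n k : ℕ)
    (hn : 2 ≤ n) (hk1 : 1 ≤ k) (hk : k ≤ n / 2) (b : F) (hb : b = 0 ∨ b = a) :
    Nat.card {P : GL (Fin n) F //
        (P : Matrix (Fin n) (Fin n) F) * Xk n k b a =
          Xk n k b a * (P : Matrix (Fin n) (Fin n) F)} =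
      glOrder (Fintype.card F) (n - k) * glOrder (Fintype.card F) k :=
  stmt_8_general F a ha n k hk b hb
end

section
/- Let F be a finite field with q elements, a ∈ F nonzero, and n = 2m+1 with m ≥ 1. Writing g(ℓ) = ∏_{i=0}^{ℓ−1}(q^ℓ − q^i) for the order of GL(ℓ,F), the number of n×n matrices X over F satisfying X² = a•X equals 2 + Σ_{k=1}^{m} 2·g(2m+1)/(g(2m−k+1)·g(k)), where each of the displayed quotients is an integer (it is the index of a centralizer, hence an orbit size). -/
open Module LinearMap MulAction

theorem card_setOf_mul_self_eq_smul {F A : Type*} [Field F] [Ring A] [Algebra F A] {a : F}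
    (ha : a ≠ 0) :
    Nat.card {X : A | X * X = a • X} = Nat.card {P : A | IsIdempotentElem P} := by
  refine Nat.card_congr
    { toFun X := ⟨a⁻¹ • X.1, ?_⟩
      invFun P := ⟨a • P.1, ?_⟩
      left_inv X := by simp [smul_smul, ha]
      right_inv P := by simp [smul_smul, ha] }
  · have hX : X.1 * X.1 = a • X.1 := X.2
    show a⁻¹ • X.1 * a⁻¹ • X.1 = a⁻¹ • X.1
    rw [smul_mul_smul_comm, hX, smul_smul, mul_assoc, inv_mul_cancel₀ ha, mul_one]
  · have hP : P.1 * P.1 = P.1 := P.2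
    show a • P.1 * a • P.1 = a • a • P.1
    rw [smul_mul_smul_comm, hP, smul_smul]

theorem MulEquiv.card_setOf_isIdempotentElem {M N : Type*} [Mul M] [Mul N] (e : M ≃* N) :
    Nat.card {x : M | IsIdempotentElem x} = Nat.card {y : N | IsIdempotentElem y} :=
  Nat.card_congr <| e.toEquiv.subtypeEquiv fun x =>
    ⟨fun h => h.map e, fun h => by simpa using h.map e.symm⟩

theorem ConjAct.commute_of_mem_stabilizer_units {M : Type*} [Monoid M] {x : M}
    {g : ConjAct Mˣ} (hg : g ∈ stabilizer (ConjAct Mˣ) x) :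
    Commute x ((ofConjAct g : Mˣ) : M) := by
  rw [mem_stabilizer_iff, ConjAct.units_smul_def, Units.mul_inv_eq_iff_eq_mul] at hg
  exact hg.symm

theorem Nat.card_setOf_eq_sum_card_fiberwise {α : Type*} [Finite α] (P : α → Prop) {r : α → ℕ}
    {n : ℕ} (hr : ∀ a, r a ≤ n) :
    Nat.card {a | P a} = ∑ k ∈ Finset.range (n + 1), Nat.card {a | P a ∧ r a = k} := by
  classical
  have := Fintype.ofFinite α
  simp only [Nat.card_eq_card_toFinset, Set.toFinset_ofPred]
  rw [Finset.card_eq_sum_card_fiberwise (t := Finset.range (n + 1)) (f := r)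
    (fun a _ => Finset.mem_range_succ_iff.mpr (hr a))]
  simp only [Finset.filter_filter]

open Finset in
theorem sum_range_eq_two_mul_add_sum_Icc_of_symm (f : ℕ → ℕ) (m : ℕ)
    (hf : ∀ k ≤ 2 * m + 1, f (2 * m + 1 - k) = f k) :
    ∑ k ∈ range (2 * m + 1 + 1), f k = 2 * f 0 + ∑ k ∈ Icc 1 m, 2 * f k := by
  have hhalf : ∑ k ∈ range (m + 1), f (m + 1 + k) = ∑ k ∈ range (m + 1), f k := by
    rw [← sum_range_reflect]
    refine sum_congr rfl fun k hk => ?_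
    rw [← hf _ (by grind)]
    congr 1
    grind
  rw [show 2 * m + 1 + 1 = (m + 1) + (m + 1) by ring, sum_range_add, hhalf, ← two_mul,
    range_eq_Ico, sum_eq_sum_Ico_succ_bot (Nat.succ_pos m), Nat.succ_eq_add_one,
    Ico_add_one_right_eq_Icc, mul_add, mul_sum]

theorem glOrder_zero (q : ℕ) : glOrder q 0 = 1 := rfl

theorem glOrder_pos {q : ℕ} (hq : 1 < q) (ℓ : ℕ) : 0 < glOrder q ℓ :=
  Finset.prod_pos fun _ hi => Nat.sub_pos_of_lt (Nat.pow_lt_pow_right hq (Finset.mem_range.mp hi))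

theorem Nat.card_linearEquiv_self {F V : Type*} [Field F] [Fintype F] [AddCommGroup V]
    [Module F V] [FiniteDimensional F V] :
    Nat.card (V ≃ₗ[F] V) = glOrder (Fintype.card F) (finrank F V) := by
  rw [← Nat.card_congr (GeneralLinearGroup.generalLinearEquiv F V).toEquiv,
    Nat.card_congr (Units.mapEquiv (toMatrixAlgEquiv (finBasis F V)).toMulEquiv).toEquiv,
    Matrix.card_GL_field, glOrder, Fin.prod_univ_eq_prod_range (fun i => _ ^ _ - _ ^ i)]

theorem LinearEquiv.conj_prodMap_id_zero {F U U' W W' : Type*} [Field F]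
    [AddCommGroup U] [Module F U] [AddCommGroup U'] [Module F U']
    [AddCommGroup W] [Module F W] [AddCommGroup W'] [Module F W']
    (φ : U ≃ₗ[F] U') (ψ : W ≃ₗ[F] W') :
    (φ.prodCongr ψ).conj (prodMap LinearMap.id 0) = prodMap LinearMap.id 0 := by
  ext <;> simp

section Idempotent

variable {F V : Type*} [Field F] [AddCommGroup V] [Module F V]

theorem LinearEquiv.finrank_range_conj (e : V ≃ₗ[F] V) (f : Module.End F V) :
    finrank F (range (e.conj f)) = finrank F (range f) := by
  rw [LinearEquiv.conj_apply, range_comp_of_range_eq_top _ (LinearEquiv.range _),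
    LinearMap.range_comp, LinearEquiv.finrank_map_eq]

theorem Module.End.conjAct_units_smul_eq_conj (g : ConjAct (Module.End F V)ˣ)
    (f : Module.End F V) :
    g • f = (GeneralLinearGroup.generalLinearEquiv F V (ConjAct.ofConjAct g)).conj f := by
  rw [ConjAct.units_smul_def]
  rfl

namespace IsIdempotentElem

variable {p q : Module.End F V}

theorem eq_conj_prodMap (hp : IsIdempotentElem p) :
    p = ((range p).prodEquivOfIsCompl (ker p) hp.isCompl).conj (prodMap LinearMap.id 0) :=
  (LinearMap.IsIdempotentElem.isProj_range _ hp).eq_conj_prodMap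

theorem exists_linearEquiv_conj_eq [FiniteDimensional F V] (hp : IsIdempotentElem p)
    (hq : IsIdempotentElem q) (h : finrank F (range p) = finrank F (range q)) :
    ∃ e : V ≃ₗ[F] V, e.conj p = q := by
  have hker : finrank F (ker p) = finrank F (ker q) := by
    have := p.finrank_range_add_finrank_ker
    have := q.finrank_range_add_finrank_ker
    omega
  set eP := (range p).prodEquivOfIsCompl (ker p) hp.isCompl
  set eQ := (range q).prodEquivOfIsCompl (ker q) hq.isCompl
  let φ := (LinearEquiv.ofFinrankEq _ _ h).prodCongr (LinearEquiv.ofFinrankEq _ _ hker)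
  refine ⟨eP.symm ≪≫ₗ φ ≪≫ₗ eQ, ?_⟩
  calc (eP.symm ≪≫ₗ φ ≪≫ₗ eQ).conj p
      = (eP.symm ≪≫ₗ φ ≪≫ₗ eQ).conj (eP.conj (prodMap LinearMap.id 0)) :=
        congrArg _ hp.eq_conj_prodMap
    _ = eQ.conj (φ.conj (prodMap LinearMap.id 0)) := by ext; simp
    _ = q := by rw [LinearEquiv.conj_prodMap_id_zero, ← hq.eq_conj_prodMap]

theorem orbit_conjAct_eq [FiniteDimensional F V] (hp : IsIdempotentElem p) :
    orbit (ConjAct (Module.End F V)ˣ) p =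
      {q | IsIdempotentElem q ∧ finrank F (range q) = finrank F (range p)} := by
  ext q
  constructor
  · rintro ⟨g, rfl⟩
    show g • p ∈ _
    rw [Module.End.conjAct_units_smul_eq_conj]
    exact ⟨hp.map (LinearEquiv.conjRingEquiv _), LinearEquiv.finrank_range_conj _ _⟩
  · rintro ⟨hq, h⟩
    obtain ⟨e, rfl⟩ := hp.exists_linearEquiv_conj_eq hq h.symm
    exact ⟨ConjAct.toConjAct ((GeneralLinearGroup.generalLinearEquiv F V).symm e),
      by simp [Module.End.conjAct_units_smul_eq_conj]⟩

/-- Restriction to `range p` and `ker p` is a bijection from the centralizer of `p` onto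
`GL(range p) × GL(ker p)`. -/
theorem card_stabilizer_conjAct (hp : IsIdempotentElem p) :
    Nat.card (stabilizer (ConjAct (Module.End F V)ˣ) p) =
      Nat.card (range p ≃ₗ[F] range p) * Nat.card (ker p ≃ₗ[F] ker p) := by
  have hmap (g : stabilizer (ConjAct (Module.End F V)ˣ) p) :=
    (LinearMap.IsIdempotentElem.commute_iff_of_isUnit (Units.isUnit _) hp).mp
      (ConjAct.commute_of_mem_stabilizer_units g.2)
  let e (g : stabilizer (ConjAct (Module.End F V)ˣ) p) :=
    GeneralLinearGroup.generalLinearEquiv F V (ConjAct.ofConjAct g.1)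
  rw [← Nat.card_prod]
  refine Nat.card_eq_of_bijective
    (fun g => ((e g).ofSubmodules _ _ (hmap g).1, (e g).ofSubmodules _ _ (hmap g).2)) ⟨?_, ?_⟩
  · intro g₁ g₂ h
    simp only [Prod.mk.injEq, LinearEquiv.ext_iff, Subtype.ext_iff] at h
    have : ((ConjAct.ofConjAct g₁.1 : (Module.End F V)ˣ) : Module.End F V) =
        ConjAct.ofConjAct g₂.1 :=
      ext_on_codisjoint hp.isCompl.codisjoint (fun x hx => h.1 ⟨x, hx⟩) (fun x hx => h.2 ⟨x, hx⟩)
    exact Subtype.ext (ConjAct.ofConjAct.injective (Units.ext this))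
  · rintro ⟨A, B⟩
    set eP := (range p).prodEquivOfIsCompl (ker p) hp.isCompl
    let T := eP.symm ≪≫ₗ A.prodCongr B ≪≫ₗ eP
    have hT : T.conj p = p :=
      calc T.conj p = T.conj (eP.conj (prodMap LinearMap.id 0)) := congrArg _ hp.eq_conj_prodMap
        _ = eP.conj ((A.prodCongr B).conj (prodMap LinearMap.id 0)) := by ext; simp [T]
        _ = p := by rw [LinearEquiv.conj_prodMap_id_zero, ← hp.eq_conj_prodMap]
    refine ⟨⟨ConjAct.toConjAct ((GeneralLinearGroup.generalLinearEquiv F V).symm T), ?_⟩, ?_⟩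
    · simp [mem_stabilizer_iff, Module.End.conjAct_units_smul_eq_conj, hT]
    · ext x <;> simp [T, e, eP]

theorem card_orbit_conjAct_mul [Fintype F] [FiniteDimensional F V] (hp : IsIdempotentElem p) :
    Nat.card (orbit (ConjAct (Module.End F V)ˣ) p) *
        (glOrder (Fintype.card F) (finrank F (range p)) *
          glOrder (Fintype.card F) (finrank F (ker p))) =
      glOrder (Fintype.card F) (finrank F V) := by
  rw [← Nat.card_linearEquiv_self, ← Nat.card_linearEquiv_self, ← Nat.card_linearEquiv_self,
    ← hp.card_stabilizer_conjAct, ← Nat.card_prod,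
    Nat.card_congr (orbitProdStabilizerEquivGroup _ p)]
  exact Nat.card_congr
    (ConjAct.ofConjAct.toEquiv.trans (GeneralLinearGroup.generalLinearEquiv F V).toEquiv)

end IsIdempotentElem

namespace Module.End

variable [FiniteDimensional F V]

theorem exists_isIdempotentElem_finrank_range_eq {k : ℕ} (hk : k ≤ finrank F V) :
    ∃ p : Module.End F V, IsIdempotentElem p ∧ finrank F (range p) = k := by
  let b := finBasis F V
  obtain ⟨W, hUW⟩ := (Submodule.span F (Set.range (b ∘ Fin.castLE hk))).exists_isCompl
  refine ⟨_, Submodule.isIdempotentElem_projection hUW, ?_⟩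
  rw [Submodule.range_projection,
    finrank_span_eq_card (b.linearIndependent.comp _ (Fin.castLE_injective hk)), Fintype.card_fin]

variable [Fintype F]

theorem card_setOf_isIdempotentElem_finrank_range_eq_mul {k : ℕ} (hk : k ≤ finrank F V) :
    Nat.card {p : Module.End F V | IsIdempotentElem p ∧ finrank F (range p) = k} *
        (glOrder (Fintype.card F) k * glOrder (Fintype.card F) (finrank F V - k)) =
      glOrder (Fintype.card F) (finrank F V) := by
  obtain ⟨p, hp, rfl⟩ := exists_isIdempotentElem_finrank_range_eq hk
  have hker : finrank F V - finrank F (range p) = finrank F (ker p) := by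
    have := p.finrank_range_add_finrank_ker
    omega
  rw [hker, ← hp.orbit_conjAct_eq]
  exact hp.card_orbit_conjAct_mul

theorem card_setOf_isIdempotentElem :
    Nat.card {p : Module.End F V | IsIdempotentElem p} =
      ∑ k ∈ Finset.range (finrank F V + 1), glOrder (Fintype.card F) (finrank F V) /
        (glOrder (Fintype.card F) k * glOrder (Fintype.card F) (finrank F V - k)) := by
  have : Finite (Module.End F V) := Module.finite_of_finite F
  rw [Nat.card_setOf_eq_sum_card_fiberwise _ fun p : Module.End F V => p.finrank_range_le]
  refine Finset.sum_congr rfl fun k hk => ?_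
  have hpos := glOrder_pos (Fintype.one_lt_card (α := F))
  exact (Nat.div_eq_of_eq_mul_left (Nat.mul_pos (hpos _) (hpos _))
    (card_setOf_isIdempotentElem_finrank_range_eq_mul (Finset.mem_range_succ_iff.mp hk)).symm).symm

end Module.End

end Idempotent

theorem stmt_10_general (F : Type*) [Field F] [Fintype F] (a : F) (ha : a ≠ 0) (m : ℕ)
    (q : ℕ) (hq : q = Fintype.card F) :
    (∀ k ∈ Finset.Icc 1 m,
        glOrder q (2 * m - k + 1) * glOrder q k ∣ glOrder q (2 * m + 1)) ∧
    Nat.card {X : Matrix (Fin (2 * m + 1)) (Fin (2 * m + 1)) F | X * X = a • X} =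
      2 + ∑ k ∈ Finset.Icc 1 m,
          2 * (glOrder q (2 * m + 1) / (glOrder q (2 * m - k + 1) * glOrder q k)) := by
  subst hq
  have hn : finrank F (Fin (2 * m + 1) → F) = 2 * m + 1 := finrank_fin_fun F
  refine ⟨fun k hk => ?_, ?_⟩
  · have := Module.End.card_setOf_isIdempotentElem_finrank_range_eq_mul
      (F := F) (V := Fin (2 * m + 1) → F) (k := k) (by grind)
    rw [hn, show 2 * m + 1 - k = 2 * m - k + 1 by grind, mul_comm (glOrder _ k)] at this
    exact Dvd.intro_left _ this
  · rw [card_setOf_mul_self_eq_smul ha,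
      Matrix.toLinAlgEquiv'.toMulEquiv.card_setOf_isIdempotentElem,
      Module.End.card_setOf_isIdempotentElem, hn, sum_range_eq_two_mul_add_sum_Icc_of_symm]
    · rw [glOrder_zero, Nat.sub_zero, one_mul, Nat.div_self (glOrder_pos Fintype.one_lt_card _)]
      refine congrArg _ (Finset.sum_congr rfl fun k hk => ?_)
      rw [show 2 * m + 1 - k = 2 * m - k + 1 by grind, mul_comm (glOrder _ k)]
    · intro k hk
      rw [Nat.sub_sub_self hk, mul_comm (glOrder _ k)]

theorem stmt_10 (F : Type*) [Field F] [Fintype F] (a : F) (ha : a ≠ 0) (m : ℕ) (hm : 1 ≤ m)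
    (q : ℕ) (hq : q = Fintype.card F) :
    (∀ k ∈ Finset.Icc 1 m,
        glOrder q (2 * m - k + 1) * glOrder q k ∣ glOrder q (2 * m + 1)) ∧
    Nat.card {X : Matrix (Fin (2 * m + 1)) (Fin (2 * m + 1)) F | X * X = a • X} =
      2 + ∑ k ∈ Finset.Icc 1 m,
          2 * (glOrder q (2 * m + 1) / (glOrder q (2 * m - k + 1) * glOrder q k)) :=
  stmt_10_general F a ha m q hq
end

section
/- Let F be a finite field of characteristic p with q elements, a ∈ F nonzero, and n ≥ 2 with p > n. Let X and Y be n×n matrices over F satisfying X² = a•X and Y² = a•Y. If trace(X) = trace(Y), then X and Y are similar over F (i.e. Y = P·X·P⁻¹ for some P ∈ GL(n,F)). That is, when p > n the trace alone separates the conjugation orbits of solutions. -/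
/-!
Dividing by `a` turns `X` and `Y` into idempotents `E` and `E'`. An idempotent splits the space
as `range ⊕ ker` and acts there as `id ⊕ 0`, so two idempotents of the same rank are conjugate.
The trace of an idempotent is its rank, read in `F`; since ranks are at most `n < p`, the cast
`ℕ → F` is injective on them, so equal traces force equal ranks.
-/

open Module LinearMap

section
variable {K V : Type*} [DivisionRing K] [AddCommGroup V] [Module K V] [FiniteDimensional K V]

theorem LinearMap.isConj_of_isIdempotentElem_of_finrank_range_eq {f g : Module.End K V}
    (hf : IsIdempotentElem f) (hg : IsIdempotentElem g)
    (hfg : finrank K (range f) = finrank K (range g)) : IsConj f g := by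
  have hker : finrank K (ker f) = finrank K (ker g) := by
    have := f.finrank_range_add_finrank_ker
    have := g.finrank_range_add_finrank_ker
    omega
  have pf := hf.isProj_range
  have pg := hg.isProj_range
  let e : V ≃ₗ[K] V := (Submodule.prodEquivOfIsCompl _ _ pf.isCompl).symm ≪≫ₗ
    (LinearEquiv.ofFinrankEq _ _ hfg).prodCongr (LinearEquiv.ofFinrankEq _ _ hker) ≪≫ₗ
    Submodule.prodEquivOfIsCompl _ _ pg.isCompl
  refine ⟨(GeneralLinearGroup.generalLinearEquiv K V).symm e, ?_⟩
  change e.toLinearMap * f = g * e.toLinearMap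
  ext v
  obtain ⟨⟨x, y⟩, rfl⟩ := (Submodule.prodEquivOfIsCompl _ _ pf.isCompl).surjective v
  simp [e, pf.map_id x x.2, pg.map_id _ (Submodule.coe_mem _)]
end

namespace Matrix
variable {K n : Type*} [Field K] [Fintype n] [DecidableEq n]

theorem trace_eq_rank_of_isIdempotentElem {E : Matrix n n K} (hE : IsIdempotentElem E) :
    E.trace = E.rank := by
  rw [← trace_toLin'_eq, rank, ← toLin'_apply']
  exact (hE.map (toLinAlgEquiv' (R := K) (n := n))).isProj_range.trace

theorem isConj_of_isIdempotentElem_of_rank_eq {E E' : Matrix n n K} (hE : IsIdempotentElem E)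
    (hE' : IsIdempotentElem E') (h : E.rank = E'.rank) : IsConj E E' := by
  have := LinearMap.isConj_of_isIdempotentElem_of_finrank_range_eq
    (hE.map (toLinAlgEquiv' (R := K) (n := n))) (hE'.map toLinAlgEquiv') h
  simpa using (toLinAlgEquiv' (R := K) (n := n)).symm.toMonoidHom.map_isConj this

theorem isConj_of_isIdempotentElem_of_trace_eq (p : ℕ) [CharP K p] (hp : Fintype.card n < p)
    {E E' : Matrix n n K} (hE : IsIdempotentElem E) (hE' : IsIdempotentElem E')
    (h : E.trace = E'.trace) : IsConj E E' := by
  refine isConj_of_isIdempotentElem_of_rank_eq hE hE' (CharP.natCast_injOn_Iio K p ?_ ?_ ?_)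
  · exact E.rank_le_card_width.trans_lt hp
  · exact E'.rank_le_card_width.trans_lt hp
  · rwa [← trace_eq_rank_of_isIdempotentElem hE, ← trace_eq_rank_of_isIdempotentElem hE']

end Matrix

theorem isIdempotentElem_inv_smul_of_mul_self_eq_smul {K A : Type*} [Field K] [Semiring A]
    [Algebra K A] {a : K} (ha : a ≠ 0) {x : A} (hx : x * x = a • x) :
    IsIdempotentElem (a⁻¹ • x) := by
  rw [IsIdempotentElem, smul_mul_smul_comm, hx, smul_smul, mul_assoc, inv_mul_cancel₀ ha, mul_one]

theorem stmt_13_general (F : Type*) [Field F] (p : ℕ) [CharP F p] (a : F) (ha : a ≠ 0)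
    (n : ℕ) (hpn : n < p)
    (X Y : Matrix (Fin n) (Fin n) F) (hX : X * X = a • X) (hY : Y * Y = a • Y)
    (htr : X.trace = Y.trace) :
    ∃ P : GL (Fin n) F,
      (P : Matrix (Fin n) (Fin n) F) * X *
        ((P⁻¹ : GL (Fin n) F) : Matrix (Fin n) (Fin n) F) = Y := by
  obtain ⟨P, hP⟩ := Matrix.isConj_of_isIdempotentElem_of_trace_eq p (by rwa [Fintype.card_fin])
    (isIdempotentElem_inv_smul_of_mul_self_eq_smul ha hX)
    (isIdempotentElem_inv_smul_of_mul_self_eq_smul ha hY)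
    (by rw [Matrix.trace_smul, Matrix.trace_smul, htr])
  refine ⟨P, (Units.mul_inv_eq_iff_eq_mul P).2 ?_⟩
  simpa only [smul_smul, mul_inv_cancel₀ ha, one_smul] using (hP.smul_right a).eq

theorem stmt_13 (F : Type*) [Field F] [Fintype F] (p : ℕ) [CharP F p] (a : F) (ha : a ≠ 0)
    (n : ℕ) (hn : 2 ≤ n) (hpn : n < p)
    (X Y : Matrix (Fin n) (Fin n) F) (hX : X * X = a • X) (hY : Y * Y = a • Y)
    (htr : X.trace = Y.trace) :
    ∃ P : GL (Fin n) F,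
      (P : Matrix (Fin n) (Fin n) F) * X *
        ((P⁻¹ : GL (Fin n) F) : Matrix (Fin n) (Fin n) F) = Y :=
  stmt_13_general F p a ha n hpn X Y hX hY htr
end

section
/- Let F be a finite field, a ∈ F nonzero, and n ≥ 2. Define the sets B_n of polynomials in F[x₁, …, x_n] recursively by B₂ = {x₂² − a²x₂, x₂x₁ − 2ax₂, x₁² − ax₁ − 2x₂}, and for n ≥ 3, with w_n = (C(n,1)a, C(n,2)a², …, C(n,n−1)a^{n−1}) ∈ F^{n−1}, B_n = {f − (f(w_n)/aⁿ)·x_n : f ∈ B_{n−1}} ∪ {x_n·x_i − C(n,i)aⁱ·x_n : i = 1, …, n}. For 0 ≤ k ≤ n let v_k = (C(k,1)a, C(k,2)a², …, C(k,n)aⁿ) ∈ Fⁿ (where C(k,i) = 0 for i > k). Then the set of common zeros in Fⁿ of all polynomials in B_n (equivalently, the variety of the ideal generated by B_n) is exactly {v₀, v₁, …, v_n}. -/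
open MvPolynomial

/-- The recursively defined sets `B_n ⊆ F[x₁, …, x_n]`.  Variable `X j` (for
`j : Fin n`) represents `x_{j+1}`.  `B₂ = {x₂² − a²x₂, x₂x₁ − 2ax₂, x₁² − ax₁ − 2x₂}`,
and for `n ≥ 3`,
`B_n = {f − (f(w_n)/aⁿ)·x_n : f ∈ B_{n−1}} ∪ {x_n·x_i − C(n,i)aⁱ·x_n : i = 1, …, n}`
where `w_n = (C(n,1)a, …, C(n,n−1)a^{n−1})`. -/
noncomputable def Bset (F : Type*) [Field F] (a : F) : (n : ℕ) → Set (MvPolynomial (Fin n) F)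
  | 0 => ∅
  | 1 => ∅
  | 2 => { (X 1) ^ 2 - C (a ^ 2) * X 1,
           X 1 * X 0 - C (2 * a) * X 1,
           (X 0) ^ 2 - C a * X 0 - C 2 * X 1 }
  | (m + 3) =>
      ((fun f : MvPolynomial (Fin (m + 2)) F =>
          rename Fin.castSucc f -
            C ((eval (fun i : Fin (m + 2) =>
                  ((m + 3).choose ((i : ℕ) + 1) : F) * a ^ ((i : ℕ) + 1)) f) / a ^ (m + 3)) *
              X (Fin.last (m + 2))) '' Bset F a (m + 2))
      ∪ Set.range (fun i : Fin (m + 3) =>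
          X (Fin.last (m + 2)) * X i -
            C (((m + 3).choose ((i : ℕ) + 1) : F) * a ^ ((i : ℕ) + 1)) * X (Fin.last (m + 2)))

lemma zeroset_aux (F : Type*) [Field F] (a : F) (ha : a ≠ 0) (m : ℕ) :
    {v : Fin (m+2) → F | ∀ f ∈ Bset F a (m+2), MvPolynomial.eval v f = 0} =
      {v : Fin (m+2) → F | ∃ k : ℕ, k ≤ m+2 ∧
        v = fun j : Fin (m+2) => (k.choose ((j : ℕ) + 1) : F) * a ^ ((j : ℕ) + 1)} := by
  induction m with
  | zero =>
    ext v
    simp only [Set.mem_setOf_eq]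
    constructor
    · intro h
      have h1 : v 1 ^ 2 - a ^ 2 * v 1 = 0 := by
        have := h ((X 1) ^ 2 - C (a ^ 2) * X 1) (by left; rfl)
        simpa using this
      have h2 : v 1 * v 0 - (2 * a) * v 1 = 0 := by
        have := h (X 1 * X 0 - C (2 * a) * X 1) (by right; left; rfl)
        simpa using this
      have h3 : v 0 ^ 2 - a * v 0 - 2 * v 1 = 0 := by
        have := h ((X 0) ^ 2 - C a * X 0 - C 2 * X 1) (by right; right; rfl)
        simpa using this
      rcases mul_eq_zero.mp (show v 1 * (v 1 - a ^ 2) = 0 by linear_combination h1) with hv1 | hv1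
      · have h3' : v 0 * (v 0 - a) = 0 := by linear_combination h3 + 2 * hv1
        rcases mul_eq_zero.mp h3' with hv0 | hv0
        · refine ⟨0, by norm_num, ?_⟩
          funext j; fin_cases j <;>
            simp [hv0, hv1, show Nat.choose 0 1 = 0 from rfl, show Nat.choose 0 2 = 0 from rfl]
        · have hv0' : v 0 = a := sub_eq_zero.mp hv0
          refine ⟨1, by norm_num, ?_⟩
          funext j; fin_cases j <;>
            simp [hv0', hv1, show Nat.choose 1 1 = 1 from rfl, show Nat.choose 1 2 = 0 from rfl]
      · have hv1' : v 1 = a ^ 2 := sub_eq_zero.mp hv1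
        have ha2 : v 1 ≠ 0 := by rw [hv1']; exact pow_ne_zero 2 ha
        have hv0 : v 0 = 2 * a := by
          rcases mul_eq_zero.mp (show v 1 * (v 0 - 2 * a) = 0 by linear_combination h2) with h' | h'
          · exact absurd h' ha2
          · exact sub_eq_zero.mp h'
        refine ⟨2, le_refl _, ?_⟩
        funext j; fin_cases j <;>
          simp [hv0, hv1', show Nat.choose 2 1 = 2 from rfl, show Nat.choose 2 2 = 1 from rfl]
    · rintro ⟨k, hk, rfl⟩
      intro f hf
      rcases hf with rfl | rfl | rfl <;>
        interval_cases k <;> simp [Nat.choose] <;> ring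
  | succ m ih =>
    ext v
    simp only [Set.mem_setOf_eq]
    have hBn : Bset F a (m + 3) = ((fun f : MvPolynomial (Fin (m + 2)) F =>
          rename Fin.castSucc f -
            C ((eval (fun i : Fin (m + 2) =>
                  ((m + 3).choose ((i : ℕ) + 1) : F) * a ^ ((i : ℕ) + 1)) f) / a ^ (m + 3)) *
              X (Fin.last (m + 2))) '' Bset F a (m + 2))
      ∪ Set.range (fun i : Fin (m + 3) =>
          X (Fin.last (m + 2)) * X i -
            C (((m + 3).choose ((i : ℕ) + 1) : F) * a ^ ((i : ℕ) + 1)) * X (Fin.last (m + 2))) := rfl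
    set w : Fin (m + 2) → F := fun i : Fin (m + 2) =>
        ((m + 3).choose ((i : ℕ) + 1) : F) * a ^ ((i : ℕ) + 1) with hw
    constructor
    · intro h
      have h1 : ∀ f ∈ Bset F a (m + 2),
          eval (v ∘ Fin.castSucc) f - (eval w f / a ^ (m + 3)) * v (Fin.last (m + 2)) = 0 := by
        intro f hf
        have hmem : (rename Fin.castSucc f -
            C (eval w f / a ^ (m + 3)) * X (Fin.last (m + 2))) ∈ Bset F a (m + 3) := by
          rw [hBn]; exact Or.inl (Set.mem_image_of_mem _ hf)
        have := h _ hmem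
        simpa [eval_rename] using this
      have h2 : ∀ i : Fin (m + 3),
          v (Fin.last (m + 2)) * v i -
            (((m + 3).choose ((i : ℕ) + 1) : F) * a ^ ((i : ℕ) + 1)) * v (Fin.last (m + 2)) = 0 := by
        intro i
        have hmem : (X (Fin.last (m + 2)) * X i -
            C (((m + 3).choose ((i : ℕ) + 1) : F) * a ^ ((i : ℕ) + 1)) * X (Fin.last (m + 2)))
            ∈ Bset F a (m + 3) := by
          rw [hBn]; exact Or.inr (Set.mem_range_self i)
        have := h _ hmem
        simpa using this
      by_cases hv : v (Fin.last (m + 2)) = 0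
      · have h1' : (v ∘ Fin.castSucc) ∈
            {u : Fin (m+2) → F | ∀ f ∈ Bset F a (m+2), MvPolynomial.eval u f = 0} := by
          intro f hf
          have := h1 f hf
          rw [hv] at this
          simpa using this
        rw [ih] at h1'
        obtain ⟨k, hk, hvk⟩ := h1'
        refine ⟨k, by omega, ?_⟩
        funext j
        induction j using Fin.lastCases with
        | last =>
          have : (Fin.last (m + 2) : ℕ) + 1 = m + 3 := by simp
          rw [hv, this, Nat.choose_eq_zero_of_lt (by omega)]
          simp
        | cast i =>
          have := congrFun hvk i
          simpa using this
      · have key : ∀ i : Fin (m + 3),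
            v i = ((m + 3).choose ((i : ℕ) + 1) : F) * a ^ ((i : ℕ) + 1) := by
          intro i
          rcases mul_eq_zero.mp (show v (Fin.last (m + 2)) *
              (v i - ((m + 3).choose ((i : ℕ) + 1) : F) * a ^ ((i : ℕ) + 1)) = 0 by
                linear_combination h2 i) with h' | h'
          · exact absurd h' hv
          · exact sub_eq_zero.mp h'
        exact ⟨m + 3, le_refl _, funext key⟩
    · rintro ⟨k, hk, rfl⟩
      intro f hf
      rw [hBn] at hf
      set vk : Fin (m + 3) → F :=
        fun j : Fin (m + 3) => (k.choose ((j : ℕ) + 1) : F) * a ^ ((j : ℕ) + 1) with hvk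
      rcases hf with ⟨g, hg, rfl⟩ | ⟨i, rfl⟩
      · simp only [map_sub, map_mul, eval_C, eval_X, eval_rename]
        by_cases hkm : k = m + 3
        · subst hkm
          have hcomp : vk ∘ Fin.castSucc = w := by
            funext i; simp [hvk, hw]
          have hlast : vk (Fin.last (m + 2)) = a ^ (m + 3) := by
            show ((m + 3).choose ((Fin.last (m + 2) : ℕ) + 1) : F) *
                a ^ ((Fin.last (m + 2) : ℕ) + 1) = a ^ (m + 3)
            rw [show ((Fin.last (m + 2) : ℕ) + 1) = m + 3 by simp, Nat.choose_self]
            simp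
          rw [hcomp, hlast, div_mul_cancel₀ _ (pow_ne_zero _ ha)]
          ring
        · have hlast : vk (Fin.last (m + 2)) = 0 := by
            simp [hvk, Nat.choose_eq_zero_of_lt (show k < m + 3 by omega)]
          have hcomp : eval (vk ∘ Fin.castSucc) g = 0 := by
            have h1' : (vk ∘ Fin.castSucc) ∈
                {u : Fin (m+2) → F | ∃ k' : ℕ, k' ≤ m+2 ∧
                  u = fun j : Fin (m+2) => (k'.choose ((j : ℕ) + 1) : F) * a ^ ((j : ℕ) + 1)} := by
              refine ⟨k, by omega, ?_⟩
              funext i; simp [hvk]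
            rw [← ih] at h1'
            exact h1' g hg
          rw [hcomp, hlast]
          ring
      · simp only [map_sub, map_mul, eval_C, eval_X]
        by_cases hkm : k = m + 3
        · subst hkm
          have : vk i = ((m + 3).choose ((i : ℕ) + 1) : F) * a ^ ((i : ℕ) + 1) := rfl
          rw [this]; ring
        · have hlast : vk (Fin.last (m + 2)) = 0 := by
            simp [hvk, Nat.choose_eq_zero_of_lt (show k < m + 3 by omega)]
          rw [hlast]; ring

theorem stmt_16 (F : Type*) [Field F] (a : F) (ha : a ≠ 0) (n : ℕ) (hn : 2 ≤ n) :
    {v : Fin n → F | ∀ f ∈ Bset F a n, MvPolynomial.eval v f = 0} =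
      {v : Fin n → F | ∃ k : ℕ, k ≤ n ∧
        v = fun j : Fin n => (k.choose ((j : ℕ) + 1) : F) * a ^ ((j : ℕ) + 1)} := by
  obtain ⟨m, rfl⟩ : ∃ m, n = m + 2 := ⟨n - 2, by omega⟩
  exact zeroset_aux F a ha m
end

section
/- Let F be a finite field with q elements and let a ∈ F be nonzero. Then the number of 4×4 matrices X over F satisfying X² = a•X is exactly q³(q² + 1)(q³ + q² + 3q + 2) + 2. -/
open Matrix LinearMap Module

section
set_option linter.unusedSectionVars false

variable {F : Type*} [Field F] [Fintype F] {n r : ℕ}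

local notation "q" => Fintype.card F

-- fiber of a surjective-ish linear map
lemma card_fiber_eq_card_ker {M N : Type*} [AddCommGroup M] [Module F M]
    [AddCommGroup N] [Module F N] (f : M →ₗ[F] N) {y : N} (x₀ : M) (hx₀ : f x₀ = y) :
    Nat.card {x : M // f x = y} = Nat.card (LinearMap.ker f) := by
  apply Nat.card_congr
  refine ⟨fun x => ⟨x.1 - x₀, by simp [LinearMap.mem_ker, map_sub, x.2, hx₀]⟩,
          fun z => ⟨z.1 + x₀, by simp [map_add, (LinearMap.mem_ker.mp z.2), hx₀]⟩,
          fun x => by simp, fun z => by simp⟩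

lemma card_fiber_of_surjective {M N : Type*} [AddCommGroup M] [Module F M] [Finite M]
    [AddCommGroup N] [Module F N] (f : M →ₗ[F] N) (hf : Function.Surjective f) (y : N) :
    Nat.card {x : M // f x = y} = q ^ (finrank F M - finrank F N) := by
  classical
  obtain ⟨x₀, hx₀⟩ := hf y
  rw [card_fiber_eq_card_ker f x₀ hx₀]
  have : FiniteDimensional F M := Module.Finite.of_finite
  have h1 : finrank F (LinearMap.ker f) = finrank F M - finrank F N := by
    have := LinearMap.finrank_range_add_finrank_ker f
    rw [LinearMap.range_eq_top.mpr hf, finrank_top] at this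
    omega
  have : Fintype (LinearMap.ker f) := Fintype.ofFinite _
  rw [Nat.card_eq_fintype_card, card_eq_pow_finrank (K := F) (V := LinearMap.ker f), h1]

lemma inj_of_left_inv {B : Matrix (Fin n) (Fin r) F} {C : Matrix (Fin r) (Fin n) F}
    (h : C * B = 1) : Function.Injective B.mulVec := by
  intro x y hxy
  have := congrArg C.mulVec hxy
  simpa [Matrix.mulVec_mulVec, h] using this

lemma card_left_inverses (hrn : r ≤ n) {B : Matrix (Fin n) (Fin r) F}
    (hB : Function.Injective B.mulVec) :
    Nat.card {C : Matrix (Fin r) (Fin n) F // C * B = 1} = q ^ (r * n - r * r) := by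
  classical
  have hinj : Function.Injective B.mulVecLin := hB
  obtain ⟨g, hg⟩ := LinearMap.exists_leftInverse_of_injective B.mulVecLin
    (LinearMap.ker_eq_bot.mpr hinj)
  let L : Matrix (Fin r) (Fin n) F →ₗ[F] Matrix (Fin r) (Fin r) F :=
    { toFun := fun C => C * B
      map_add' := fun _ _ => Matrix.add_mul _ _ _
      map_smul' := fun _ _ => Matrix.smul_mul _ _ _ }
  have key : ∀ C : Matrix (Fin r) (Fin n) F, L C = C * B := fun _ => rfl
  have hC₀ : LinearMap.toMatrix' g * B = 1 := by
    apply Matrix.toLin'.injective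
    rw [Matrix.toLin'_apply', Matrix.mulVecLin_mul, Matrix.toLin'_apply', Matrix.mulVecLin_one]
    rw [← Matrix.toLin'_apply', Matrix.toLin'_toMatrix']
    exact hg
  have hsurj : Function.Surjective L := by
    intro M
    exact ⟨M * LinearMap.toMatrix' g, by rw [key, Matrix.mul_assoc, hC₀, Matrix.mul_one]⟩
  have := card_fiber_of_surjective (F := F) L hsurj 1
  simp only [key] at this
  rw [this, Module.finrank_matrix, Module.finrank_matrix]
  simp [Fintype.card_fin]

lemma card_pairs (hrn : r ≤ n) :
    Nat.card {p : Matrix (Fin n) (Fin r) F × Matrix (Fin r) (Fin n) F // p.2 * p.1 = 1} =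
      (∏ i : Fin r, (q ^ n - q ^ (i : ℕ))) * q ^ (r * n - r * r) := by
  classical
  let e : {p : Matrix (Fin n) (Fin r) F × Matrix (Fin r) (Fin n) F // p.2 * p.1 = 1} ≃
      Σ B : {B : Matrix (Fin n) (Fin r) F // Function.Injective B.mulVec},
        {C : Matrix (Fin r) (Fin n) F // C * B.1 = 1} :=
    { toFun := fun p => ⟨⟨p.1.1, inj_of_left_inv p.2⟩, ⟨p.1.2, p.2⟩⟩
      invFun := fun s => ⟨(s.1.1, s.2.1), s.2.2⟩
      left_inv := fun p => rfl
      right_inv := fun s => rfl }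
  rw [Nat.card_congr e, Nat.card_eq_fintype_card, Fintype.card_sigma]
  have h1 : ∀ B : {B : Matrix (Fin n) (Fin r) F // Function.Injective B.mulVec},
      Fintype.card {C : Matrix (Fin r) (Fin n) F // C * B.1 = 1} = q ^ (r * n - r * r) := by
    intro B
    rw [← Nat.card_eq_fintype_card, card_left_inverses hrn B.2]
  simp only [h1, Finset.sum_const, Finset.card_univ, smul_eq_mul]
  congr 1
  -- card of injective matrices = card of linearly independent families
  have e2 : {B : Matrix (Fin n) (Fin r) F // Function.Injective B.mulVec} ≃
      {s : Fin r → (Fin n → F) // LinearIndependent F s} :=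
    { toFun := fun B => ⟨B.1ᵀ, Matrix.mulVec_injective_iff.mp B.2⟩
      invFun := fun s => ⟨(Matrix.of s.1)ᵀ, Matrix.mulVec_injective_iff.mpr (by
        simpa using s.2)⟩
      left_inv := fun B => by ext i j; rfl
      right_inv := fun s => by ext i j; rfl }
  rw [← Nat.card_eq_fintype_card, Nat.card_congr e2, card_linearIndependent]
  · simp
  · simpa using hrn

lemma exists_factor {E : Matrix (Fin n) (Fin n) F} (hE : E * E = E) (hr : E.rank = r) :
    ∃ (B : Matrix (Fin n) (Fin r) F) (C : Matrix (Fin r) (Fin n) F),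
      C * B = 1 ∧ B * C = E := by
  classical
  set e := E.mulVecLin with he_def
  have hee : ∀ x, e (e x) = e x := by
    intro x
    have h2 : (E * E).mulVecLin = E.mulVecLin ∘ₗ E.mulVecLin := Matrix.mulVecLin_mul E E
    rw [hE] at h2
    exact (congrFun (congrArg DFunLike.coe h2.symm) x : _)
  set V := LinearMap.range e with hV_def
  have hfix : ∀ v : V, e (v : Fin n → F) = (v : Fin n → F) := by
    rintro ⟨_, x, rfl⟩
    exact hee x
  have hVfin : Module.finrank F V = r := hr
  let b : Basis (Fin r) F V := Module.finBasisOfFinrankEq F V hVfin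
  let u : (Fin r → F) ≃ₗ[F] V := b.equivFun.symm
  refine ⟨LinearMap.toMatrix' (V.subtype ∘ₗ u.toLinearMap),
    LinearMap.toMatrix' (u.symm.toLinearMap ∘ₗ e.rangeRestrict), ?_, ?_⟩
  · rw [← LinearMap.toMatrix'_comp]
    have : (u.symm.toLinearMap ∘ₗ e.rangeRestrict) ∘ₗ (V.subtype ∘ₗ u.toLinearMap)
        = LinearMap.id := by
      apply LinearMap.ext
      intro x
      have h3 : e.rangeRestrict (V.subtype (u x)) = u x := by
        ext
        simp [hfix]
      simp only [LinearMap.comp_apply, LinearEquiv.coe_coe, LinearMap.id_apply,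
        Submodule.coe_subtype] at h3 ⊢
      rw [h3, LinearEquiv.symm_apply_apply]
    rw [this, LinearMap.toMatrix'_id]
  · rw [← LinearMap.toMatrix'_comp]
    have : (V.subtype ∘ₗ u.toLinearMap) ∘ₗ (u.symm.toLinearMap ∘ₗ e.rangeRestrict) = e := by
      ext x
      simp
    rw [this, he_def, ← Matrix.toLin'_apply', LinearMap.toMatrix'_toLin']

lemma rank_BC {B : Matrix (Fin n) (Fin r) F} {C : Matrix (Fin r) (Fin n) F}
    (h : C * B = 1) : (B * C).rank = r := by
  refine le_antisymm ((Matrix.rank_mul_le_left B C).trans (Matrix.rank_le_width B)) ?_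
  have h1 : C * (B * C) * B = 1 := by
    simp only [Matrix.mul_assoc, h, Matrix.mul_one]
  calc r = (C * (B * C) * B).rank := by rw [h1, Matrix.rank_one, Fintype.card_fin]
  _ ≤ (C * (B * C)).rank := Matrix.rank_mul_le_left _ _
  _ ≤ (B * C).rank := Matrix.rank_mul_le_right _ _

lemma card_idem_mul (hrn : r ≤ n) :
    Nat.card {E : Matrix (Fin n) (Fin n) F // E * E = E ∧ E.rank = r} *
      Nat.card (GL (Fin r) F) =
      (∏ i : Fin r, (q ^ n - q ^ (i : ℕ))) * q ^ (r * n - r * r) := by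
  classical
  rw [← card_pairs hrn]
  set S := {p : Matrix (Fin n) (Fin r) F × Matrix (Fin r) (Fin n) F // p.2 * p.1 = 1} with hS
  set T := {E : Matrix (Fin n) (Fin n) F // E * E = E ∧ E.rank = r} with hT
  have hφmem : ∀ p : S, p.1.1 * p.1.2 * (p.1.1 * p.1.2) = p.1.1 * p.1.2 := by
    rintro ⟨⟨B, C⟩, hp⟩
    have hp' : C * B = 1 := hp
    show B * C * (B * C) = B * C
    rw [Matrix.mul_assoc B C (B * C), ← Matrix.mul_assoc C B C, hp', Matrix.one_mul]
  let φ : S → T := fun p => ⟨p.1.1 * p.1.2, hφmem p, rank_BC p.2⟩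
  have fib : ∀ E : T, Nat.card {p : S // φ p = E} = Nat.card (GL (Fin r) F) := by
    intro E
    obtain ⟨B₀, C₀, hCB, hBC⟩ := exists_factor E.2.1 E.2.2
    symm
    have hmem : ∀ g : GL (Fin r) F,
        ((g⁻¹ : GL (Fin r) F) : Matrix (Fin r) (Fin r) F) * C₀ *
          (B₀ * (g : Matrix (Fin r) (Fin r) F)) = 1 := by
      intro g
      calc ((g⁻¹ : GL (Fin r) F) : Matrix (Fin r) (Fin r) F) * C₀ *
            (B₀ * (g : Matrix (Fin r) (Fin r) F))
          = ((g⁻¹ : GL (Fin r) F) : Matrix (Fin r) (Fin r) F) * (C₀ * B₀) *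
            (g : Matrix (Fin r) (Fin r) F) := by simp only [Matrix.mul_assoc]
        _ = 1 := by rw [hCB, Matrix.mul_one, Units.inv_mul]
    have hval : ∀ g : GL (Fin r) F,
        B₀ * (g : Matrix (Fin r) (Fin r) F) *
          (((g⁻¹ : GL (Fin r) F) : Matrix (Fin r) (Fin r) F) * C₀) = E.1 := by
      intro g
      calc B₀ * (g : Matrix (Fin r) (Fin r) F) *
            (((g⁻¹ : GL (Fin r) F) : Matrix (Fin r) (Fin r) F) * C₀)
          = B₀ * ((g * g⁻¹ : GL (Fin r) F) : Matrix (Fin r) (Fin r) F) * C₀ := by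
            simp only [Units.val_mul, Matrix.mul_assoc]
        _ = E.1 := by rw [mul_inv_cancel]; simp [hBC]
    let f : GL (Fin r) F → {p : S // φ p = E} := fun g =>
      ⟨⟨(B₀ * (g : Matrix (Fin r) (Fin r) F),
         ((g⁻¹ : GL (Fin r) F) : Matrix (Fin r) (Fin r) F) * C₀), hmem g⟩,
       Subtype.ext (hval g)⟩
    apply Nat.card_eq_of_bijective f
    constructor
    · intro g g' hgg
      have h1 : B₀ * (g : Matrix (Fin r) (Fin r) F) = B₀ * (g' : Matrix (Fin r) (Fin r) F) :=
        congrArg (fun p => p.1.1.1) hgg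
      have h2 := congrArg (fun M => C₀ * M) h1
      simp only [← Matrix.mul_assoc, hCB, Matrix.one_mul] at h2
      exact Units.ext h2
    · rintro ⟨⟨⟨B, C⟩, hp⟩, hφp⟩
      have hp' : C * B = 1 := hp
      have hE : B * C = E.1 := congrArg Subtype.val hφp
      have u1 : C₀ * B * (C * B₀) = 1 := by
        calc C₀ * B * (C * B₀) = C₀ * (B * C) * B₀ := by simp only [Matrix.mul_assoc]
        _ = C₀ * (B₀ * C₀) * B₀ := by rw [hE, hBC]
        _ = C₀ * B₀ * (C₀ * B₀) := by simp only [Matrix.mul_assoc]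
        _ = 1 := by rw [hCB, Matrix.one_mul]
      have u2 : C * B₀ * (C₀ * B) = 1 := by
        calc C * B₀ * (C₀ * B) = C * (B₀ * C₀) * B := by simp only [Matrix.mul_assoc]
        _ = C * (B * C) * B := by rw [hE, hBC]
        _ = C * B * (C * B) := by simp only [Matrix.mul_assoc]
        _ = 1 := by rw [hp', Matrix.one_mul]
      refine ⟨⟨C₀ * B, C * B₀, u1, u2⟩, ?_⟩
      apply Subtype.ext
      apply Subtype.ext
      have e1 : B₀ * (C₀ * B) = B := by
        calc B₀ * (C₀ * B) = B₀ * C₀ * B := by simp only [Matrix.mul_assoc]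
        _ = B * C * B := by rw [hBC, ← hE]
        _ = B := by simp only [Matrix.mul_assoc, hp', Matrix.mul_one]
      have e2 : C * B₀ * C₀ = C := by
        calc C * B₀ * C₀ = C * (B₀ * C₀) := by simp only [Matrix.mul_assoc]
        _ = C * (B * C) := by rw [hBC, ← hE]
        _ = C := by simp only [← Matrix.mul_assoc, hp', Matrix.one_mul]
      show ((B₀ * (C₀ * B), C * B₀ * C₀) : Matrix (Fin n) (Fin r) F × Matrix (Fin r) (Fin n) F)
          = (B, C)
      rw [e1, e2]
  calc Nat.card T * Nat.card (GL (Fin r) F)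
      = ∑ _E : T, Nat.card (GL (Fin r) F) := by
        rw [Finset.sum_const, Finset.card_univ, smul_eq_mul, Nat.card_eq_fintype_card]
    _ = ∑ E : T, Fintype.card {p : S // φ p = E} := by
        refine Finset.sum_congr rfl fun E _ => ?_
        rw [← Nat.card_eq_fintype_card, fib E]
    _ = Nat.card S := by
        rw [← Nat.card_congr (Equiv.sigmaFiberEquiv φ), Nat.card_eq_fintype_card,
          Fintype.card_sigma]

lemma card_idem_split :
    Nat.card {E : Matrix (Fin n) (Fin n) F // E * E = E} =
      ∑ i : Fin (n + 1),
        Nat.card {E : Matrix (Fin n) (Fin n) F // E * E = E ∧ E.rank = (i : ℕ)} := by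
  classical
  let ψ : {E : Matrix (Fin n) (Fin n) F // E * E = E} → Fin (n + 1) := fun E =>
    ⟨E.1.rank, Nat.lt_succ_of_le (E.1.rank_le_card_width.trans (Fintype.card_fin n).le)⟩
  rw [Nat.card_congr (Equiv.sigmaFiberEquiv ψ).symm, Nat.card_eq_fintype_card,
    Fintype.card_sigma]
  refine Finset.sum_congr rfl fun i _ => ?_
  rw [← Nat.card_eq_fintype_card]
  apply Nat.card_congr
  exact
    { toFun := fun x => ⟨x.1.1, x.1.2, congrArg Fin.val x.2⟩
      invFun := fun E => ⟨⟨E.1, E.2.1⟩, Fin.ext E.2.2⟩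
      left_inv := fun x => by ext : 2 <;> rfl
      right_inv := fun E => rfl }

lemma card_solutions {a : F} (ha : a ≠ 0) :
    Nat.card {X : Matrix (Fin n) (Fin n) F | X * X = a • X} =
      Nat.card {E : Matrix (Fin n) (Fin n) F // E * E = E} := by
  apply Nat.card_congr
  refine
    { toFun := fun X => ⟨a⁻¹ • X.1, ?_⟩
      invFun := fun E => ⟨a • E.1, ?_⟩
      left_inv := fun X => Subtype.ext ?_
      right_inv := fun E => Subtype.ext ?_ }
  · have h : X.1 * X.1 = a • X.1 := X.2
    rw [Matrix.smul_mul, Matrix.mul_smul, h, smul_smul, smul_smul]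
    congr 1
    field_simp
  · have h : E.1 * E.1 = E.1 := E.2
    show (a • E.1) * (a • E.1) = a • (a • E.1)
    rw [Matrix.smul_mul, Matrix.mul_smul, h]
  · show a • a⁻¹ • X.1 = X.1
    rw [smul_smul, mul_inv_cancel₀ ha, one_smul]
  · show a⁻¹ • a • E.1 = E.1
    rw [smul_smul, inv_mul_cancel₀ ha, one_smul]

end

theorem stmt_19 (F : Type*) [Field F] [Fintype F] (a : F) (ha : a ≠ 0) :
    Nat.card {X : Matrix (Fin 4) (Fin 4) F | X * X = a • X} =
      Fintype.card F ^ 3 * (Fintype.card F ^ 2 + 1) *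
        (Fintype.card F ^ 3 + Fintype.card F ^ 2 + 3 * Fintype.card F + 2) + 2 := by
  classical
  have hq : 2 ≤ Fintype.card F := Fintype.one_lt_card
  have hq1 : 1 ≤ Fintype.card F := le_trans one_le_two hq
  have hpow : ∀ {i j : ℕ}, i ≤ j → Fintype.card F ^ i ≤ Fintype.card F ^ j := fun h => Nat.pow_le_pow_right hq1 h
  rw [card_solutions ha, card_idem_split,
    Fin.sum_univ_eq_sum_range
      (fun r => Nat.card {E : Matrix (Fin 4) (Fin 4) F // E * E = E ∧ E.rank = r}) 5]
  have key : ∀ r : ℕ, r ≤ 4 → ∀ v : ℕ,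
      v * Nat.card (GL (Fin r) F) =
        (∏ i : Fin r, (Fintype.card F ^ 4 - Fintype.card F ^ (i : ℕ))) * Fintype.card F ^ (r * 4 - r * r) →
      Nat.card {E : Matrix (Fin 4) (Fin 4) F // E * E = E ∧ E.rank = r} = v := fun r hr v hv =>
    Nat.eq_of_mul_eq_mul_right Nat.card_pos ((card_idem_mul hr).trans hv.symm)
  have h0 := key 0 (by norm_num) 1 (by simp [Matrix.card_GL_field])
  have h1 := key 1 (by norm_num) (Fintype.card F ^ 3 * (Fintype.card F ^ 3 + Fintype.card F ^ 2 + Fintype.card F + 1)) (by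
    rw [Matrix.card_GL_field]
    simp only [Fin.prod_univ_one, Fin.val_zero, pow_zero, pow_one]
    have a1 : (1 : ℕ) ≤ Fintype.card F ^ 4 := hpow (by norm_num : 0 ≤ 4) |>.trans_eq' (by norm_num)
    zify [hq1, a1]
    ring)
  have h2 := key 2 (by norm_num) (Fintype.card F ^ 4 * (Fintype.card F ^ 2 + 1) * (Fintype.card F ^ 2 + Fintype.card F + 1)) (by
    rw [Matrix.card_GL_field]
    simp only [Fin.prod_univ_two, Fin.val_zero, Fin.val_one, pow_zero, pow_one]
    have a1 : (1 : ℕ) ≤ Fintype.card F ^ 4 := Nat.one_le_pow _ _ (by omega)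
    have a2 : Fintype.card F ≤ Fintype.card F ^ 4 := by calc Fintype.card F = Fintype.card F ^ 1 := (pow_one (Fintype.card F)).symm
                                  _ ≤ Fintype.card F ^ 4 := hpow (by norm_num)
    have a3 : (1 : ℕ) ≤ Fintype.card F ^ 2 := Nat.one_le_pow _ _ (by omega)
    have a4 : Fintype.card F ≤ Fintype.card F ^ 2 := by calc Fintype.card F = Fintype.card F ^ 1 := (pow_one (Fintype.card F)).symm
                                  _ ≤ Fintype.card F ^ 2 := hpow (by norm_num)
    zify [a1, a2, a3, a4]
    ring)
  have h3 := key 3 (by norm_num) (Fintype.card F ^ 3 * (Fintype.card F ^ 3 + Fintype.card F ^ 2 + Fintype.card F + 1)) (by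
    rw [Matrix.card_GL_field]
    simp only [Fin.prod_univ_three, Fin.val_zero, Fin.val_one, Fin.val_two, pow_zero, pow_one]
    have a1 : (1 : ℕ) ≤ Fintype.card F ^ 4 := Nat.one_le_pow _ _ (by omega)
    have a2 : Fintype.card F ≤ Fintype.card F ^ 4 := by calc Fintype.card F = Fintype.card F ^ 1 := (pow_one (Fintype.card F)).symm
                                  _ ≤ Fintype.card F ^ 4 := hpow (by norm_num)
    have a3 : Fintype.card F ^ 2 ≤ Fintype.card F ^ 4 := hpow (by norm_num)
    have a4 : (1 : ℕ) ≤ Fintype.card F ^ 3 := Nat.one_le_pow _ _ (by omega)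
    have a5 : Fintype.card F ≤ Fintype.card F ^ 3 := by calc Fintype.card F = Fintype.card F ^ 1 := (pow_one (Fintype.card F)).symm
                                  _ ≤ Fintype.card F ^ 3 := hpow (by norm_num)
    have a6 : Fintype.card F ^ 2 ≤ Fintype.card F ^ 3 := hpow (by norm_num)
    zify [a1, a2, a3, a4, a5, a6]
    ring)
  have h4 := key 4 (by norm_num) 1 (by
    rw [Matrix.card_GL_field]
    norm_num)
  rw [Finset.sum_range_succ, Finset.sum_range_succ, Finset.sum_range_succ,
    Finset.sum_range_succ, Finset.sum_range_one, h0, h1, h2, h3, h4]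
  ring
end
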